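/- arXiv:2402.09605 — 2 statements merged into one kernel-verified Lean document; each statement's English description precedes it below -/
import Mathlib

section
/- Every point of the curve Γ = {(η₁,η₂,η₃;ξ) = (η, r(η), -r(η); 0) : |η| > 1} is a space-time resonance for the quartic gBBM phase φ(η₁,η₂,η₃;ξ) = -ω(ξ) + ω(η₁) + ω(η₂) + ω(η₃) + ω(ξ-η₁-η₂-η₃), where ω(ξ) = ξ/(1+ξ²) and r(η) = sign(η)·√((η²+3)/(η²-1)). -/
/-!
The phase is built from the odd function `ω`, so `φ η₁ η₂ (-η₂) 0 = ω η₁ + ω (-η₁) = 0` for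
all `η₁, η₂`; this gives the time resonance and the vanishing of `∂φ/∂η₁` along `Γ`. The other two
partial derivatives reduce to `ω' (r η) - ω' η`, using that `ω'` is even, and this vanishes because
`r η ^ 2` is the second root `s` of `(1 - s) / (1 + s) ^ 2 = (1 - η ^ 2) / (1 + η ^ 2) ^ 2`.
-/

noncomputable def ω : ℝ → ℝ := fun ξ => ξ / (1 + ξ^2)

noncomputable def r (ξ : ℝ) : ℝ := Real.sign ξ * Real.sqrt ((ξ^2 + 3) / (ξ^2 - 1))

noncomputable def φ (η₁ η₂ η₃ ξ : ℝ) : ℝ :=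
  -ω ξ + ω η₁ + ω η₂ + ω η₃ + ω (ξ - η₁ - η₂ - η₃)

lemma ω_neg (x : ℝ) : ω (-x) = -ω x := by
  simp only [ω, neg_sq, neg_div]

lemma ω_zero : ω 0 = 0 := by
  simp [ω]

lemma hasDerivAt_ω (x : ℝ) : HasDerivAt ω ((1 - x^2) / (1 + x^2)^2) x := by
  have hx : 1 + x^2 ≠ 0 := by positivity
  have hden : HasDerivAt (fun y : ℝ => 1 + y^2) (2 * x) x := by
    simpa using (hasDerivAt_pow 2 x).const_add 1
  exact ((hasDerivAt_id' x).div hden hx).congr_deriv (by ring)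

lemma deriv_ω (x : ℝ) : deriv ω x = (1 - x^2) / (1 + x^2)^2 :=
  (hasDerivAt_ω x).deriv

lemma differentiable_ω : Differentiable ℝ ω :=
  fun x => (hasDerivAt_ω x).differentiableAt

lemma deriv_ω_neg (x : ℝ) : deriv ω (-x) = deriv ω x := by
  rw [deriv_ω, deriv_ω, neg_sq]

lemma r_sq {η : ℝ} (hη : 1 ≤ |η|) : r η ^ 2 = (η^2 + 3) / (η^2 - 1) := by
  have hη0 : η ≠ 0 := by
    rintro rfl
    norm_num at hη
  have hsign : Real.sign η ^ 2 = 1 := by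
    rcases Real.sign_apply_eq_of_ne_zero η hη0 with h | h <;> simp [h]
  have hη2 : 1 ≤ η^2 := by nlinarith [sq_abs η, abs_nonneg η]
  have hnn : 0 ≤ (η^2 + 3) / (η^2 - 1) := div_nonneg (by positivity) (by linarith)
  rw [r, mul_pow, hsign, one_mul, Real.sq_sqrt hnn]

lemma deriv_ω_r {η : ℝ} (hη : 1 < |η|) : deriv ω (r η) = deriv ω η := by
  have hη2 : η^2 - 1 ≠ 0 := by nlinarith [sq_abs η, abs_nonneg η]
  have hpos : 1 + η^2 ≠ 0 := by positivity
  have hsub : 1 - (η^2 + 3) / (η^2 - 1) = -4 / (η^2 - 1) := by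
    field_simp
    ring
  have hadd : 1 + (η^2 + 3) / (η^2 - 1) = 2 * (1 + η^2) / (η^2 - 1) := by
    field_simp
    ring
  rw [deriv_ω, deriv_ω, r_sq hη.le, hsub, hadd]
  field_simp
  ring

lemma φ_neg_pair (η₁ η₂ : ℝ) : φ η₁ η₂ (-η₂) 0 = 0 := by
  rw [φ, show (0 : ℝ) - η₁ - η₂ - -η₂ = -η₁ by ring, ω_neg, ω_neg, ω_zero]
  ring

lemma hasDerivAt_φ_snd (η₁ η₂ η₃ ξ : ℝ) :
    HasDerivAt (fun t => φ η₁ t η₃ ξ) (deriv ω η₂ - deriv ω (ξ - η₁ - η₂ - η₃)) η₂ := by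
  have hlast : HasDerivAt (fun t => ω (ξ - η₁ - t - η₃)) (deriv ω (ξ - η₁ - η₂ - η₃) * -1) η₂ :=
    (differentiable_ω _).hasDerivAt.comp η₂ (((hasDerivAt_id η₂).const_sub _).sub_const _)
      |>.congr_deriv (by simp)
  exact ((((differentiable_ω η₂).hasDerivAt.const_add (-ω ξ + ω η₁)).add_const (ω η₃)).add hlast)
    |>.congr_deriv (by ring)

lemma hasDerivAt_φ_thd (η₁ η₂ η₃ ξ : ℝ) :
    HasDerivAt (fun t => φ η₁ η₂ t ξ) (deriv ω η₃ - deriv ω (ξ - η₁ - η₂ - η₃)) η₃ := by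
  have hlast : HasDerivAt (fun t => ω (ξ - η₁ - η₂ - t)) (deriv ω (ξ - η₁ - η₂ - η₃) * -1) η₃ :=
    (differentiable_ω _).hasDerivAt.comp η₃ ((hasDerivAt_id η₃).const_sub _)
      |>.congr_deriv (by simp)
  exact (((differentiable_ω η₃).hasDerivAt.const_add (-ω ξ + ω η₁ + ω η₂)).add hlast)
    |>.congr_deriv (by ring)

theorem bbm_resonant_curve :
    ∀ η : ℝ, 1 < |η| →
      φ η (r η) (-r η) 0 = 0 ∧
      deriv (fun t => φ t (r η) (-r η) 0) η = 0 ∧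
      deriv (fun t => φ η t (-r η) 0) (r η) = 0 ∧
      deriv (fun t => φ η (r η) t 0) (-r η) = 0 := by
  intro η hη
  refine ⟨φ_neg_pair η (r η), ?_, ?_, ?_⟩
  · simp only [φ_neg_pair, deriv_const]
  · rw [(hasDerivAt_φ_snd η (r η) (-r η) 0).deriv,
      show (0 : ℝ) - η - r η - -r η = -η by ring, deriv_ω_neg, deriv_ω_r hη, sub_self]
  · rw [(hasDerivAt_φ_thd η (r η) (-r η) 0).deriv,
      show (0 : ℝ) - η - r η - -r η = -η by ring, deriv_ω_neg, deriv_ω_neg, deriv_ω_r hη, sub_self]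
end

section
/- The function η ↦ -ω(η) - ω(r(η)) + ω(η + r(η)), where ω(ξ) = ξ/(1+ξ²) and r(η) = sign(η)·√((η²+3)/(η²-1)), has no zeros on {|η| > 1}. -/
lemma omega_neg (x : ℝ) : ω (-x) = - ω x := by
  simp [ω, neg_div, neg_sq]

lemma key (a b : ℝ) (ha : 1 < a) (hb : 0 < b) : -ω a - ω b + ω (a + b) < 0 := by
  have h1 : (0:ℝ) < 1 + a^2 := by nlinarith
  have h2 : (0:ℝ) < 1 + b^2 := by nlinarith
  have h3 : (0:ℝ) < 1 + (a+b)^2 := by nlinarith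
  have hωb : 0 < ω b := div_pos hb h2
  have hdec : ω (a + b) < ω a := by
    unfold ω
    rw [div_lt_div_iff₀ h3 h1]
    have h4 : 1 < a * (a + b) := by nlinarith
    nlinarith [mul_pos hb (sub_pos.mpr h4)]
  have : -ω a + ω (a + b) < 0 := by linarith
  linarith

lemma r_pos (η : ℝ) (hη : 1 < η) : 0 < r η := by
  have hs : Real.sign η = 1 := Real.sign_of_pos (by linarith)
  have harg : 0 < (η^2 + 3) / (η^2 - 1) := by
    apply div_pos <;> nlinarith
  rw [r, hs, one_mul]
  exact Real.sqrt_pos.mpr harg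

lemma r_neg_eq (η : ℝ) (hη : η < -1) : r η = - r (-η) := by
  have hs : Real.sign η = -1 := Real.sign_of_neg (by linarith)
  have hs' : Real.sign (-η) = 1 := Real.sign_of_pos (by linarith)
  rw [r, r, hs, hs', neg_sq]
  ring

theorem bbm_phase_no_zeros_sum :
    ∀ η : ℝ, 1 < |η| → -ω η - ω (r η) + ω (η + r η) ≠ 0 := by
  intro η hη
  rcases lt_trichotomy η 0 with h | h | h
  case inr.inl => simp [h] at hη; linarith
  · -- η < 0, so η < -1
    have hη' : η < -1 := by
      rcases lt_or_ge η (-1) with h1 | h1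
      · exact h1
      · exfalso
        have : |η| = -η := abs_of_neg h
        rw [this] at hη; linarith
    have hr := r_pos (-η) (by linarith)
    have hre := r_neg_eq η hη'
    have hk := key (-η) (r (-η)) (by linarith) hr
    have e2 : ω (-(r (-η))) = - ω (r (-η)) := omega_neg _
    have e3 : ω (η + -(r (-η))) = - ω (-η + r (-η)) := by
      rw [← omega_neg]; ring_nf
    rw [hre, e2, e3]
    intro hc
    have e1 : ω (-η) = -ω η := omega_neg η
    linarith
  · -- η > 0, so 1 < η
    have hη' : 1 < η := by
      have : |η| = η := abs_of_pos h
      rwa [this] at hη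
    have hr := r_pos η hη'
    exact ne_of_lt (key η (r η) hη' hr)
end
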